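/- Let X be a tight Grassmannian frame of m vectors for R^n at angle α which is not an ETF, with m odd. Then every x ∈ X has at most m-2 packing neighbors, and moreover there exists x ∈ X with at most m-3 packing neighbors, i.e., |{y ∈ X : y ≠ x, |⟨x,y⟩| = α}| ≤ m-3. -/

import Mathlib

open scoped RealInnerProductSpace
abbrev E (n : ℕ) := EuclideanSpace ℝ (Fin n)
noncomputable def cohF {n m : ℕ} (x : Fin m → E n) : ℝ :=
  sSup {r : ℝ | ∃ i j : Fin m, i ≠ j ∧ r = |⟪x i, x j⟫|}

/-!
Tightness makes every row of the squared Gram matrix sum to the frame bound, so all rows have the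
same off-diagonal sum of squares, each term at most `α ^ 2`. A vector whose `m - 1` inner products
all have modulus `α` attains the maximum, which then forces every row to do the same, i.e. an ETF.
Hence in the graph of packing neighbours every degree is at most `m - 2`; if all were equal to
`m - 2`, the handshake lemma would make `m (m - 2)` even, impossible for odd `m`.
-/

open Finset

namespace SimpleGraph

variable {V : Type*} [Fintype V] {G : SimpleGraph V} [DecidableRel G.Adj]

theorem degree_le_card_sub_two [DecidableEq V] {v : V} (h : ∃ w ≠ v, ¬ G.Adj v w) :
    G.degree v ≤ Fintype.card V - 2 := by
  obtain ⟨w, hwv, hvw⟩ := h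
  have hcompl : 0 < Gᶜ.degree v := Gᶜ.degree_pos_iff_exists_adj v |>.2 ⟨w, hwv.symm, hvw⟩
  rw [degree_compl] at hcompl
  omega

theorem IsRegularOfDegree.even_card_mul {d : ℕ} (h : G.IsRegularOfDegree d) :
    Even (Fintype.card V * d) := by
  have hsum := G.sum_degrees_eq_twice_card_edges
  simp only [h.degree_eq, sum_const, card_univ, smul_eq_mul] at hsum
  exact hsum ▸ even_two_mul _

end SimpleGraph

section Frame

variable {ι F : Type*} [NormedAddCommGroup F] [InnerProductSpace ℝ F]

def packingGraph (x : ι → F) (α : ℝ) : SimpleGraph ι where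
  Adj i j := i ≠ j ∧ |⟪x i, x j⟫| = α
  symm := ⟨fun i j h => ⟨h.1.symm, by rw [real_inner_comm]; exact h.2⟩⟩
  loopless := ⟨fun _ h => h.1 rfl⟩

theorem ncard_packing_neighbors_eq_degree [Fintype ι] (x : ι → F) (α : ℝ)
    [DecidableRel (packingGraph x α).Adj] (i : ι) :
    {j | j ≠ i ∧ |⟪x i, x j⟫| = α}.ncard = (packingGraph x α).degree i := by
  have hset : {j | j ≠ i ∧ |⟪x i, x j⟫| = α} = (packingGraph x α).neighborSet i := by
    ext j
    simp [packingGraph, ne_comm]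
  rw [hset, Set.ncard_eq_toFinset_card']
  rfl

variable [Fintype ι]

theorem sum_inner_sq_eq_of_tight {x : ι → F} {c : ℝ}
    (htight : ∀ v : F, ∑ j, ⟪x j, v⟫ • x j = c • v) (i : ι) :
    ∑ j, ⟪x i, x j⟫ ^ 2 = c * ‖x i‖ ^ 2 := by
  have h := congrArg (⟪·, x i⟫) (htight (x i))
  simp only [sum_inner, real_inner_smul_left, real_inner_self_eq_norm_sq] at h
  rw [← h]
  exact sum_congr rfl fun j _ => by rw [real_inner_comm, sq]

theorem sum_erase_inner_sq_eq_of_tight [DecidableEq ι] {x : ι → F} {c : ℝ}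
    (hunit : ∀ i, ‖x i‖ = 1) (htight : ∀ v : F, ∑ j, ⟪x j, v⟫ • x j = c • v) (i : ι) :
    ∑ j ∈ univ.erase i, ⟪x i, x j⟫ ^ 2 = c - 1 := by
  have h := sum_inner_sq_eq_of_tight htight i
  rw [← add_sum_erase _ _ (mem_univ i), real_inner_self_eq_norm_sq, hunit, one_pow,
    one_pow, mul_one] at h
  linarith

end Frame

theorem abs_eq_of_row_abs_eq {ι : Type*} [Fintype ι] [DecidableEq ι] {a : ι → ι → ℝ} {α S : ℝ}
    (hle : ∀ i j, i ≠ j → |a i j| ≤ α) (hrow : ∀ i, ∑ j ∈ univ.erase i, a i j ^ 2 = S)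
    {i₀ : ι} (hi₀ : ∀ j ≠ i₀, |a i₀ j| = α) {i j : ι} (hij : i ≠ j) : |a i j| = α := by
  have hS : S = ∑ _l ∈ univ.erase i, α ^ 2 := by
    rw [← hrow i₀, sum_congr rfl fun l hl => by rw [← sq_abs, hi₀ l (ne_of_mem_erase hl)]]
    simp only [sum_const, card_erase_of_mem (mem_univ _)]
  have hsq_le : ∀ l ∈ univ.erase i, a i l ^ 2 ≤ α ^ 2 := fun l hl => by
    rw [← sq_abs]
    exact pow_le_pow_left₀ (abs_nonneg _) (hle i l (ne_of_mem_erase hl).symm) 2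
  have hsq : a i j ^ 2 = α ^ 2 :=
    (sum_eq_sum_iff_of_le hsq_le).1 ((hrow i).trans hS) j (mem_erase.2 ⟨hij.symm, mem_univ j⟩)
  rw [← sq_abs] at hsq
  exact (sq_eq_sq₀ (abs_nonneg _) ((abs_nonneg _).trans (hle i j hij))).1 hsq

theorem abs_inner_le_cohF {n m : ℕ} (x : Fin m → E n) {i j : Fin m} (hij : i ≠ j) :
    |⟪x i, x j⟫| ≤ cohF x := by
  have hfin : {r : ℝ | ∃ i j : Fin m, i ≠ j ∧ r = |⟪x i, x j⟫|}.Finite :=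
    (Set.finite_range fun p : Fin m × Fin m => |⟪x p.1, x p.2⟫|).subset
      fun _ ⟨i, j, _, hr⟩ => ⟨(i, j), hr.symm⟩
  exact le_csSup hfin.bddAbove ⟨i, j, hij, rfl⟩

theorem tight_grassmannian_not_etf_neighbors_general {n m : ℕ} (hm : Odd m)
    (x : Fin m → E n) (hunit : ∀ i, ‖x i‖ = 1)
    (htight : ∀ v : E n, ∑ i, ⟪x i, v⟫ • x i = ((m : ℝ) / n) • v)
    (α : ℝ) (hα : cohF x = α)
    (hnotETF : ¬ ∃ c : ℝ, ∀ i j : Fin m, i ≠ j → |⟪x i, x j⟫| = c) :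
    (∀ i : Fin m, {j : Fin m | j ≠ i ∧ |⟪x i, x j⟫| = α}.ncard ≤ m - 2) ∧
    ∃ i : Fin m, {j : Fin m | j ≠ i ∧ |⟪x i, x j⟫| = α}.ncard ≤ m - 3 := by
  classical
  have hle : ∀ i j, i ≠ j → |⟪x i, x j⟫| ≤ α := fun i j hij => hα ▸ abs_inner_le_cohF x hij
  have hnonadj : ∀ i, ∃ j ≠ i, ¬ (packingGraph x α).Adj i j := by
    intro i
    by_contra! hall
    exact hnotETF ⟨α, fun k j hkj => abs_eq_of_row_abs_eq hle
      (sum_erase_inner_sq_eq_of_tight hunit htight) (fun j hj => (hall j hj).2) hkj⟩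
  have hdeg : ∀ i, (packingGraph x α).degree i ≤ m - 2 := fun i => by
    simpa using (packingGraph x α).degree_le_card_sub_two (hnonadj i)
  have hncard := ncard_packing_neighbors_eq_degree x α
  refine ⟨fun i => hncard i ▸ hdeg i, ?_⟩
  by_contra! hgt
  have hreg : (packingGraph x α).IsRegularOfDegree (m - 2) := fun i => by
    have := hgt i
    rw [hncard i] at this
    exact le_antisymm (hdeg i) (by omega)
  have hm3 : 3 ≤ m := by
    obtain ⟨j, hj, -⟩ := hnonadj ⟨0, hm.pos⟩
    obtain ⟨k, rfl⟩ := hm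
    have := Fin.val_ne_of_ne hj
    omega
  have hodd : Odd (m * (m - 2)) := hm.mul (Nat.Odd.sub_even (by omega) hm even_two)
  exact Nat.not_even_iff_odd.2 hodd (by simpa using hreg.even_card_mul)

theorem tight_grassmannian_not_etf_neighbors {n m : ℕ} (hn : 0 < n) (hm : Odd m)
    (x : Fin m → E n) (hinj : Function.Injective x) (hunit : ∀ i, ‖x i‖ = 1)
    (htight : ∀ v : E n, ∑ i, ⟪x i, v⟫ • x i = ((m : ℝ) / n) • v)
    (α : ℝ) (hα : cohF x = α)
    (hmin : ∀ y : Fin m → E n, Function.Injective y → (∀ i, ‖y i‖ = 1) → α ≤ cohF y)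
    (hnotETF : ¬ ∃ c : ℝ, ∀ i j : Fin m, i ≠ j → |⟪x i, x j⟫| = c) :
    (∀ i : Fin m, {j : Fin m | j ≠ i ∧ |⟪x i, x j⟫| = α}.ncard ≤ m - 2) ∧
    ∃ i : Fin m, {j : Fin m | j ≠ i ∧ |⟪x i, x j⟫| = α}.ncard ≤ m - 3 :=
  tight_grassmannian_not_etf_neighbors_general hm x hunit htight α hα hnotETF
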